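/- Let w and ω be points of the open upper half-plane with ω = |ω|e^{iτ}, and let N_p(w,ω) be the Nevanlinna prime factor of order p ≥ 1. If |w/ω| ≥ 1/3, then log|N_p(w,ω)| ≤ C_p·|sin τ|·|w/ω|^p for a constant C_p depending only on p (one may take C_p = 2·∑_{k=1}^p 3^{p-k} ≤ 3^p). -/

import Mathlib

/-- Weierstrass prime factor of order `p`. -/
noncomputable def Wfac (z : ℂ) (p : ℕ) : ℂ :=
  (1 - z) * Complex.exp (∑ k ∈ Finset.Icc 1 p, z ^ k / (k : ℂ))

/-- Nevanlinna prime factor of order `p`: `N_p(w,ω) = W(w/ω,p) / W(w/conj ω,p)`. -/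
noncomputable def Nfac (w ω : ℂ) (p : ℕ) : ℂ :=
  Wfac (w / ω) p / Wfac (w / (starRingEnd ℂ ω)) p

/-!
Write `z₁ = w/ω`, `z₂ = w/ω̄` and `S(z) = ∑_{k=1}^p z^k/k`, so that
`log|N_p| = log|1 - z₁| - log|1 - z₂| + Re (S(z₁) - S(z₂))`. For `w, ω` in the upper half-plane
`w` is closer to `ω` than to `ω̄`, so the logarithmic terms contribute at most `0`. In the
polynomial part, `|z₁^k - z₂^k| = |w/ω|^k · 2|Im ωᵏ|/|ω|ᵏ = 2|w/ω|^k |sin kτ| ≤ 2k |w/ω|^k |sin τ|`,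
and `|w/ω| ≥ 1/3` gives `|w/ω|^k ≤ 3^(p-k) |w/ω|^p`.
-/

open Complex ComplexConjugate Finset

lemma Complex.abs_im_pow_succ_le (z : ℂ) (n : ℕ) :
    |(z ^ (n + 1)).im| ≤ (n + 1) * ‖z‖ ^ n * |z.im| := by
  induction n with
  | zero => simp
  | succ n ih =>
    calc |(z ^ (n + 1 + 1)).im|
        = |(z ^ (n + 1)).re * z.im + (z ^ (n + 1)).im * z.re| := by rw [pow_succ, mul_im]
      _ ≤ |(z ^ (n + 1)).re| * |z.im| + |(z ^ (n + 1)).im| * |z.re| := by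
          rw [← abs_mul, ← abs_mul]
          exact abs_add_le _ _
      _ ≤ ‖z‖ ^ (n + 1) * |z.im| + ((n + 1) * ‖z‖ ^ n * |z.im|) * ‖z‖ := by
          gcongr
          · exact (abs_re_le_norm _).trans (norm_pow z _).le
          · exact abs_re_le_norm z
      _ = (↑(n + 1) + 1) * ‖z‖ ^ (n + 1) * |z.im| := by push_cast; ring

lemma Complex.norm_conj_sub_self (z : ℂ) : ‖conj z - z‖ = 2 * |z.im| := by
  rw [← norm_neg, neg_sub, sub_conj, norm_mul, norm_I, mul_one, norm_real, Real.norm_eq_abs,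
    abs_mul, abs_two]

lemma norm_div_pow_sub_div_conj_pow_le (w : ℂ) {ω : ℂ} (hω : ω ≠ 0) (k : ℕ) :
    ‖(w / ω) ^ k - (w / conj ω) ^ k‖ ≤ 2 * k * ‖w / ω‖ ^ k * |Real.sin ω.arg| := by
  cases k with
  | zero => simp
  | succ n =>
    have hω' : ‖ω‖ ≠ 0 := norm_ne_zero_iff.mpr hω
    have hdiff : (w / ω) ^ (n + 1) - (w / conj ω) ^ (n + 1)
        = w ^ (n + 1) * (conj (ω ^ (n + 1)) - ω ^ (n + 1)) /
            (ω ^ (n + 1) * conj (ω ^ (n + 1))) := by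
      have : conj ω ≠ 0 := (map_ne_zero _).mpr hω
      rw [div_pow, div_pow, map_pow]
      field_simp
    calc ‖(w / ω) ^ (n + 1) - (w / conj ω) ^ (n + 1)‖
        = ‖w‖ ^ (n + 1) * (2 * |(ω ^ (n + 1)).im|) / (‖ω‖ ^ (n + 1) * ‖ω‖ ^ (n + 1)) := by
          rw [hdiff, norm_div, norm_mul, norm_conj_sub_self, norm_mul, norm_conj, norm_pow,
            norm_pow]
      _ ≤ ‖w‖ ^ (n + 1) * (2 * ((n + 1) * ‖ω‖ ^ n * |ω.im|)) / (‖ω‖ ^ (n + 1) * ‖ω‖ ^ (n + 1)) := by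
          gcongr
          exact abs_im_pow_succ_le ω n
      _ = 2 * ↑(n + 1) * ‖w / ω‖ ^ (n + 1) * |Real.sin ω.arg| := by
          rw [sin_arg, abs_div, abs_norm, norm_div, div_pow]
          push_cast
          field_simp
          ring

lemma norm_one_sub_div_le_norm_one_sub_div_conj {w ω : ℂ} (hw : 0 < w.im) (hω : 0 < ω.im) :
    ‖1 - w / ω‖ ≤ ‖1 - w / conj ω‖ := by
  have hω0 : ω ≠ 0 := fun h ↦ by simp [h] at hω
  have hωc : conj ω ≠ 0 := (map_ne_zero _).mpr hω0
  rw [one_sub_div hω0, one_sub_div hωc, norm_div, norm_div, norm_conj]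
  gcongr
  rw [norm_def, norm_def]
  apply Real.sqrt_le_sqrt
  simp only [normSq_apply, sub_re, sub_im, conj_re, conj_im]
  nlinarith

lemma log_norm_Wfac {z : ℂ} (hz : z ≠ 1) (p : ℕ) :
    Real.log ‖Wfac z p‖ = Real.log ‖1 - z‖ + (∑ k ∈ Icc 1 p, z ^ k / (k : ℂ)).re := by
  rw [Wfac, norm_mul, norm_exp, Real.log_mul (norm_ne_zero_iff.mpr (sub_ne_zero.mpr hz.symm))
    (Real.exp_ne_zero _), Real.log_exp]

lemma log_norm_Nfac_le {w ω : ℂ} (hw : 0 < w.im) (hω : 0 < ω.im) (p : ℕ) :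
    Real.log ‖Nfac w ω p‖ ≤
      ‖∑ k ∈ Icc 1 p, ((w / ω) ^ k - (w / conj ω) ^ k) / (k : ℂ)‖ := by
  have hωc : conj ω ≠ 0 := (map_ne_zero _).mpr fun h ↦ by simp [h] at hω
  have hz₂ : w / conj ω ≠ 1 := fun h ↦ by
    have : w.im = -ω.im := by rw [(div_eq_one_iff_eq hωc).mp h, conj_im]
    linarith
  by_cases hz₁ : w / ω = 1
  · simp [Nfac, Wfac, hz₁]
  have hW : ∀ {z : ℂ}, z ≠ 1 → Wfac z p ≠ 0 := fun hz ↦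
    mul_ne_zero (sub_ne_zero.mpr (Ne.symm hz)) (exp_ne_zero _)
  rw [Nfac, norm_div, Real.log_div (norm_ne_zero_iff.mpr (hW hz₁)) (norm_ne_zero_iff.mpr (hW hz₂)),
    log_norm_Wfac hz₁, log_norm_Wfac hz₂]
  have hlog : Real.log ‖1 - w / ω‖ ≤ Real.log ‖1 - w / conj ω‖ :=
    Real.log_le_log (norm_pos_iff.mpr (sub_ne_zero.mpr (Ne.symm hz₁)))
      (norm_one_sub_div_le_norm_one_sub_div_conj hw hω)
  have hre := re_le_norm (∑ k ∈ Icc 1 p, (w / ω) ^ k / (k : ℂ) -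
    ∑ k ∈ Icc 1 p, (w / conj ω) ^ k / (k : ℂ))
  rw [sub_re] at hre
  simp only [sub_div, sum_sub_distrib]
  linarith

lemma pow_le_pow_mul_pow_of_inv_le {c r : ℝ} (hc : 0 < c) (hr : c⁻¹ ≤ r) {k p : ℕ} (hk : k ≤ p) :
    r ^ k ≤ c ^ (p - k) * r ^ p := by
  have hr0 : 0 ≤ r := (inv_pos.mpr hc).le.trans hr
  calc r ^ k = c ^ (p - k) * (c⁻¹ ^ (p - k) * r ^ k) := by
        rw [← mul_assoc, ← mul_pow, mul_inv_cancel₀ hc.ne', one_pow, one_mul]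
    _ ≤ c ^ (p - k) * (r ^ (p - k) * r ^ k) := by gcongr
    _ = c ^ (p - k) * r ^ p := by rw [← pow_add, Nat.sub_add_cancel hk]

theorem stmt4_general (p : ℕ) (w ω : ℂ) (hw : 0 < w.im) (hω : 0 < ω.im)
    (h : 1 / 3 ≤ ‖w / ω‖) :
    Real.log ‖Nfac w ω p‖ ≤
      (2 * ∑ k ∈ Finset.Icc 1 p, (3 : ℝ) ^ (p - k)) * |Real.sin ω.arg| * ‖w / ω‖ ^ p := by
  have hω0 : ω ≠ 0 := fun h ↦ by simp [h] at hω
  have h3 : (3 : ℝ)⁻¹ ≤ ‖w / ω‖ := by simpa using h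
  calc Real.log ‖Nfac w ω p‖
      ≤ ‖∑ k ∈ Icc 1 p, ((w / ω) ^ k - (w / conj ω) ^ k) / (k : ℂ)‖ := log_norm_Nfac_le hw hω p
    _ ≤ ∑ k ∈ Icc 1 p, ‖(w / ω) ^ k - (w / conj ω) ^ k‖ / k := by
        refine (norm_sum_le _ _).trans_eq (sum_congr rfl fun k _ ↦ ?_)
        rw [norm_div, Complex.norm_natCast]
    _ ≤ ∑ k ∈ Icc 1 p, 2 * |Real.sin ω.arg| * ‖w / ω‖ ^ k := by
        refine sum_le_sum fun k hk ↦ ?_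
        have hk0 : (0 : ℝ) < k := by exact_mod_cast (mem_Icc.mp hk).1
        rw [div_le_iff₀ hk0]
        linarith [norm_div_pow_sub_div_conj_pow_le w hω0 k]
    _ ≤ ∑ k ∈ Icc 1 p, 2 * |Real.sin ω.arg| * (3 ^ (p - k) * ‖w / ω‖ ^ p) := by
        gcongr with k hk
        exact pow_le_pow_mul_pow_of_inv_le three_pos h3 (mem_Icc.mp hk).2
    _ = (2 * ∑ k ∈ Icc 1 p, (3 : ℝ) ^ (p - k)) * |Real.sin ω.arg| * ‖w / ω‖ ^ p := by
        rw [mul_sum, sum_mul, sum_mul]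
        exact sum_congr rfl fun k _ ↦ by ring

theorem stmt4 (p : ℕ) (hp : 1 ≤ p) (w ω : ℂ) (hw : 0 < w.im) (hω : 0 < ω.im)
    (h : 1 / 3 ≤ ‖w / ω‖) :
    Real.log ‖Nfac w ω p‖ ≤
      (2 * ∑ k ∈ Finset.Icc 1 p, (3 : ℝ) ^ (p - k)) * |Real.sin ω.arg| * ‖w / ω‖ ^ p :=
  stmt4_general p w ω hw hω h
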